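/- Let X_1, X_2, … be a sequence of real-valued random variables, and suppose there are constants A > 0, a > 0, b ≥ 0 and γ ∈ (0,2) such that for all integers m ≥ 0, n ≥ 1 and all reals t ≥ 0, P{S(m+1, m+n) > t} ≤ A·exp(−a t² / (n + b t^γ)). Then for every 0 < c < a there exists a constant C > 0 (depending only on A, a, b, γ and c) such that for all integers n ≥ 1, m ≥ 0 and all reals t ≥ 0, P{M⁺(m+1, m+n) > t} ≤ C·exp(−c t² / (n + b t^γ)), where M⁺(m+1, m+n) = max_{m+1 ≤ j ≤ m+n} (S(m+1, j) ∨ 0). -/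

import Mathlib

open MeasureTheory Finset Real

/-!
Write `R(n, t) = t² / (n + b t^γ)`, fix `θ = (1 + c/a)/2` (so that `a θ² ≥ c`) and
`ε = (1 - θ)²/4`, and argue by strong induction on `n`. When `n` is bounded, the union bound over
the `n` partial sums costs only a constant factor; when `R(n, t)` is bounded the claim is trivial;
when `b t^γ > ε n` the union bound still suffices, because then `n ≤ b t^γ / ε` is polynomial in
`x = t^(2-γ)` while `(a - c) R(n, t)` is at least a multiple of `x`. Otherwise cut the block into a
head of length `h = n - l` and a tail of length `l = ⌊ε n⌋`: if some partial sum exceeds `t`, then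
one already does within the head, or the whole head exceeds `θ t`, or a partial sum of the tail
exceeds `(1 - θ) t`. Since the tail is short and `b t^γ ≤ ε n`, the induction hypothesis and the
Bernstein bound make each of the three probabilities at most `C e^{-c R(n, t)} / 3` once `R(n, t)`
is large.
-/

noncomputable def bernsteinRate (b γ n t : ℝ) : ℝ := t ^ 2 / (n + b * t ^ γ)

lemma neg_div_eq_neg_mul_bernsteinRate (a b γ n t : ℝ) :
    -(a * t ^ 2) / (n + b * t ^ γ) = -(a * bernsteinRate b γ n t) := by
  rw [bernsteinRate, neg_div, mul_div_assoc]

lemma exp_neg_le_exp_neg_div_three {x y : ℝ} (h : x + log 3 ≤ y) : exp (-y) ≤ exp (-x) / 3 := by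
  calc exp (-y) ≤ exp (-x - log 3) := exp_le_exp.mpr (by linarith)
    _ = exp (-x) / 3 := by rw [exp_sub, exp_log (by norm_num)]

lemma rpow_mul_exp_neg_mul_le {x p q : ℝ} (hx : 0 ≤ x) (hp : 0 < p) (hq : 0 < q) :
    x ^ p * exp (-(q * x)) ≤ (p / q) ^ p := by
  have hx_le : x ≤ p / q * exp (q * x / p) := by
    calc x = p / q * (q * x / p) := by field_simp
      _ ≤ p / q * exp (q * x / p) := by
        gcongr; linarith [add_one_le_exp (q * x / p)]
  have hpow : x ^ p ≤ (p / q) ^ p * exp (q * x) := by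
    calc x ^ p ≤ (p / q * exp (q * x / p)) ^ p := by gcongr
      _ = (p / q) ^ p * exp (q * x) := by
        rw [mul_rpow (by positivity) (exp_nonneg _), ← exp_mul, div_mul_cancel₀ _ hp.ne']
  calc x ^ p * exp (-(q * x)) ≤ (p / q) ^ p * exp (q * x) * exp (-(q * x)) := by gcongr
    _ = (p / q) ^ p := by rw [mul_assoc, ← exp_add, add_neg_cancel, exp_zero, mul_one]

lemma exists_nat_half_le_le {x : ℝ} (hx : 2 ≤ x) : ∃ l : ℕ, 1 ≤ l ∧ x / 2 ≤ l ∧ (l : ℝ) ≤ x := by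
  refine ⟨⌊x⌋₊, Nat.le_floor (by push_cast; linarith), ?_, Nat.floor_le (by linarith)⟩
  linarith [Nat.lt_floor_add_one x]

section BernsteinRate

variable {b γ : ℝ}

lemma mul_sq_mul_bernsteinRate_le {μ n k s t : ℝ} (hb : 0 ≤ b) (hγ : 0 ≤ γ) (hμ : 0 < μ)
    (hk : 0 < k) (hs : 0 ≤ s) (hs1 : s ≤ 1) (ht : 0 ≤ t)
    (hkn : μ * (k + b * t ^ γ) ≤ n + b * t ^ γ) :
    μ * s ^ 2 * bernsteinRate b γ n t ≤ bernsteinRate b γ k (s * t) := by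
  have hst : b * (s * t) ^ γ ≤ b * t ^ γ := by
    gcongr; exact mul_le_of_le_one_left ht hs1
  have hk' : 0 < k + b * (s * t) ^ γ := by positivity
  have hn : 0 < n + b * t ^ γ := lt_of_lt_of_le (by positivity) hkn
  rw [bernsteinRate, bernsteinRate, ← mul_div_assoc, div_le_div_iff₀ hn hk']
  have := mul_le_mul_of_nonneg_left hst hμ.le
  have : 0 ≤ (s * t) ^ 2 := sq_nonneg _
  nlinarith

lemma exists_mul_exp_neg_bernsteinRate_le {κ ε : ℝ} (hγ : γ ∈ Set.Ioo 0 2) (hκ : 0 < κ)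
    (hε : 0 < ε) : ∃ B, ∀ n t : ℝ, 0 ≤ n → 0 ≤ t → ε * n < b * t ^ γ →
      n * exp (-(κ * bernsteinRate b γ n t)) ≤ B := by
  obtain ⟨hγ0, hγ2⟩ := hγ
  set p := γ / (2 - γ)
  set q := κ * ε / ((1 + ε) * b)
  refine ⟨b / ε * (p / q) ^ p, fun n t hn ht hbt => ?_⟩
  have hD : 0 < b * t ^ γ := lt_of_le_of_lt (by positivity) hbt
  have hb : 0 < b := pos_of_mul_pos_left hD (rpow_nonneg ht γ)
  have ht0 : 0 < t := by
    rcases ht.eq_or_lt with rfl | h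
    · rw [zero_rpow hγ0.ne', mul_zero] at hD; exact absurd hD (lt_irrefl 0)
    · exact h
  set x := t ^ (2 - γ)
  have hx : 0 ≤ x := by positivity
  have htγ : t ^ γ = x ^ p := by
    rw [← rpow_mul ht]; congr 1; simp only [p]; field_simp [show 2 - γ ≠ 0 by linarith]
  have ht2 : t ^ 2 = x * t ^ γ := by
    rw [← rpow_add ht0, sub_add_cancel]; norm_cast
  have hn_le : n ≤ b / ε * x ^ p := by
    rw [← htγ, div_mul_eq_mul_div, le_div_iff₀ hε]; linarith
  have hrate : q * x ≤ κ * bernsteinRate b γ n t := by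
    have hden : n + b * t ^ γ ≤ (1 + ε) * (b * t ^ γ) / ε := by
      rw [le_div_iff₀ hε]; linarith
    calc q * x = κ * (x * t ^ γ) / ((1 + ε) * (b * t ^ γ) / ε) := by
          simp only [q]; field_simp
      _ ≤ κ * (x * t ^ γ) / (n + b * t ^ γ) := by gcongr
      _ = κ * bernsteinRate b γ n t := by rw [← ht2, bernsteinRate, mul_div_assoc]
  calc n * exp (-(κ * bernsteinRate b γ n t)) ≤ b / ε * x ^ p * exp (-(q * x)) := by
        gcongr
    _ = b / ε * (x ^ p * exp (-(q * x))) := by ring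
    _ ≤ b / ε * (p / q) ^ p := by
        gcongr; exact rpow_mul_exp_neg_mul_le hx (div_pos hγ0 (by linarith)) (by positivity)

lemma bisection_terms_le {A a c θ ε K C n h l t : ℝ} (hb : 0 ≤ b) (hγ : 0 ≤ γ) (hA : 0 ≤ A)
    (hc : 0 < c) (hθ0 : 0 ≤ θ) (hθ1 : θ ≤ 1) (hθ : c ≤ a * θ ^ 2) (hε : (1 - θ) ^ 2 = 4 * ε)
    (hε0 : 0 < ε) (hK : log 3 ≤ c * ε / 4 * K) (hCA : 3 * A ≤ C)
    (hh : 1 ≤ h) (hl : 1 ≤ l) (hhl : h + l = n) (hl_ge : ε * n / 2 ≤ l) (hl_le : l ≤ ε * n)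
    (ht : 0 ≤ t) (hbt : b * t ^ γ ≤ ε * n) (hR : K ≤ bernsteinRate b γ n t) :
    C * exp (-(c * bernsteinRate b γ h t)) + A * exp (-(a * bernsteinRate b γ h (θ * t)))
      + C * exp (-(c * bernsteinRate b γ l ((1 - θ) * t)))
      ≤ C * exp (-(c * bernsteinRate b γ n t)) := by
  set R := bernsteinRate b γ n t
  have hε1 : ε ≤ 1 / 4 := by nlinarith
  have hlog3 : 0 < log 3 := log_pos (by norm_num)
  have hR0 : 0 ≤ R := by
    have : 0 < K := pos_of_mul_pos_right (hlog3.trans_le hK) (by positivity)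
    linarith
  have hcR : log 3 ≤ c * ε / 4 * R := hK.trans (by gcongr)
  have hC : 0 ≤ C := by linarith
  have hhead : (1 + ε / 4) * R ≤ bernsteinRate b γ h t := by
    have := mul_sq_mul_bernsteinRate_le (μ := 1 + ε / 4) (n := n) (k := h) (s := 1) hb hγ
      (by positivity) (by linarith) zero_le_one le_rfl ht (by nlinarith)
    simpa using this
  have hmid : c * R ≤ a * bernsteinRate b γ h (θ * t) := by
    have := mul_sq_mul_bernsteinRate_le (μ := 1) (n := n) (k := h) hb hγ one_pos (by linarith)
      hθ0 hθ1 ht (by linarith)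
    have ha : 0 ≤ a := by nlinarith
    nlinarith
  have htail : 2 * R ≤ bernsteinRate b γ l ((1 - θ) * t) := by
    have hlen : 1 / (2 * ε) * (l + b * t ^ γ) ≤ n + b * t ^ γ := by
      rw [div_mul_eq_mul_div, div_le_iff₀ (by positivity)]; nlinarith
    have := mul_sq_mul_bernsteinRate_le (s := 1 - θ) hb hγ (by positivity) (by linarith)
      (by linarith) (by linarith) ht hlen
    rwa [hε, show 1 / (2 * ε) * (4 * ε) = 2 by field_simp; ring] at this
  have h₁ : exp (-(c * bernsteinRate b γ h t)) ≤ exp (-(c * R)) / 3 :=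
    exp_neg_le_exp_neg_div_three (by nlinarith)
  have h₂ : exp (-(a * bernsteinRate b γ h (θ * t))) ≤ exp (-(c * R)) := by
    gcongr
  have h₃ : exp (-(c * bernsteinRate b γ l ((1 - θ) * t))) ≤ exp (-(c * R)) / 3 :=
    exp_neg_le_exp_neg_div_three (by nlinarith [mul_le_mul_of_nonneg_left htail hc.le])
  have := mul_le_mul_of_nonneg_left h₁ hC
  have := mul_le_mul_of_nonneg_left h₂ hA
  have := mul_le_mul_of_nonneg_left h₃ hC
  have : 0 ≤ exp (-(c * R)) := exp_nonneg _
  nlinarith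

end BernsteinRate

section Probability

variable {Ω : Type*} {X : ℕ → Ω → ℝ}

def partialSumExceeds (X : ℕ → Ω → ℝ) (m n : ℕ) (t : ℝ) : Set Ω :=
  {ω | ∃ j ∈ Icc (m + 1) (m + n), t < ∑ i ∈ Icc (m + 1) j, X i ω}

lemma setOf_lt_sup'_eq_partialSumExceeds {m n : ℕ} {t : ℝ} (ht : 0 ≤ t)
    (hne : (Icc (m + 1) (m + n)).Nonempty) :
    {ω | t < (Icc (m + 1) (m + n)).sup' hne (fun j => (∑ i ∈ Icc (m + 1) j, X i ω) ⊔ 0)} =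
      partialSumExceeds X m n t := by
  ext ω
  simp only [Set.mem_ofPred_eq, lt_sup'_iff, lt_sup_iff, partialSumExceeds, not_lt.mpr ht,
    or_false]

lemma partialSumExceeds_add_subset (m h l : ℕ) (t θ : ℝ) :
    partialSumExceeds X m (h + l) t ⊆
      partialSumExceeds X m h t ∪ {ω | θ * t < ∑ i ∈ Icc (m + 1) (m + h), X i ω} ∪
        partialSumExceeds X (m + h) l ((1 - θ) * t) := by
  rintro ω ⟨j, hj, hjt⟩
  rw [mem_Icc] at hj
  by_cases hjh : j ≤ m + h
  · exact Or.inl (Or.inl ⟨j, mem_Icc.mpr ⟨hj.1, hjh⟩, hjt⟩)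
  have hsum : ∑ i ∈ Icc (m + 1) j, X i ω =
      ∑ i ∈ Icc (m + 1) (m + h), X i ω + ∑ i ∈ Icc (m + h + 1) j, X i ω := by
    simp only [Icc_add_one_left_eq_Ioc]
    exact (sum_Ioc_consecutive _ (by omega) (by omega)).symm
  by_cases hhead : θ * t < ∑ i ∈ Icc (m + 1) (m + h), X i ω
  · exact Or.inl (Or.inr hhead)
  · refine Or.inr ⟨j, mem_Icc.mpr ⟨by omega, by omega⟩, ?_⟩
    linarith

variable [MeasurableSpace Ω] {P : Measure Ω} {A a b γ : ℝ}

def HasBernsteinTail (P : Measure Ω) (X : ℕ → Ω → ℝ) (A a b γ : ℝ) : Prop :=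
  ∀ (m n : ℕ), 1 ≤ n → ∀ t : ℝ, 0 ≤ t →
    P {ω | t < ∑ i ∈ Icc (m + 1) (m + n), X i ω}
      ≤ ENNReal.ofReal (A * exp (-(a * t ^ 2) / (n + b * t ^ γ)))

lemma measureReal_setOf_lt_sum_le (hBern : HasBernsteinTail P X A a b γ) (hA : 0 ≤ A)
    (m : ℕ) {n : ℕ} (hn : 1 ≤ n) {t : ℝ} (ht : 0 ≤ t) :
    P.real {ω | t < ∑ i ∈ Icc (m + 1) (m + n), X i ω} ≤
      A * exp (-(a * bernsteinRate b γ n t)) := by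
  rw [← neg_div_eq_neg_mul_bernsteinRate]
  exact ENNReal.toReal_le_of_le_ofReal (by positivity) (hBern m n hn t ht)

lemma measureReal_partialSumExceeds_le_mul [IsFiniteMeasure P]
    (hBern : HasBernsteinTail P X A a b γ) (hA : 0 ≤ A) (ha : 0 ≤ a) (hb : 0 ≤ b)
    (m n : ℕ) {t : ℝ} (ht : 0 ≤ t) :
    P.real (partialSumExceeds X m n t) ≤ n * (A * exp (-(a * bernsteinRate b γ n t))) := by
  have hunion : partialSumExceeds X m n t =
      ⋃ j ∈ Icc (m + 1) (m + n), {ω | t < ∑ i ∈ Icc (m + 1) j, X i ω} := by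
    ext ω; simp [partialSumExceeds]
  have hterm : ∀ j ∈ Icc (m + 1) (m + n), P.real {ω | t < ∑ i ∈ Icc (m + 1) j, X i ω} ≤
      A * exp (-(a * bernsteinRate b γ n t)) := by
    intro j hj
    obtain ⟨k, hk, hkn, rfl⟩ : ∃ k, 1 ≤ k ∧ k ≤ n ∧ j = m + k :=
      ⟨j - m, by grind, by grind, by grind⟩
    refine (measureReal_setOf_lt_sum_le hBern hA m hk ht).trans ?_
    have : bernsteinRate b γ n t ≤ bernsteinRate b γ k t :=
      div_le_div_of_nonneg_left (sq_nonneg t) (by positivity) (by gcongr)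
    gcongr
  calc P.real (partialSumExceeds X m n t)
      ≤ ∑ j ∈ Icc (m + 1) (m + n), P.real {ω | t < ∑ i ∈ Icc (m + 1) j, X i ω} :=
        hunion ▸ measureReal_biUnion_finset_le _ _
    _ ≤ n * (A * exp (-(a * bernsteinRate b γ n t))) := by
        simpa using sum_le_sum hterm

lemma measureReal_partialSumExceeds_add_le [IsFiniteMeasure P]
    (hBern : HasBernsteinTail P X A a b γ) (hA : 0 ≤ A) (m : ℕ) {h : ℕ} (hh : 1 ≤ h) (l : ℕ)
    {t θ : ℝ} (ht : 0 ≤ t) (hθ : 0 ≤ θ) :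
    P.real (partialSumExceeds X m (h + l) t) ≤ P.real (partialSumExceeds X m h t)
      + A * exp (-(a * bernsteinRate b γ h (θ * t)))
      + P.real (partialSumExceeds X (m + h) l ((1 - θ) * t)) := by
  calc _ ≤ P.real (partialSumExceeds X m h t)
        + P.real {ω | θ * t < ∑ i ∈ Icc (m + 1) (m + h), X i ω}
        + P.real (partialSumExceeds X (m + h) l ((1 - θ) * t)) :=
        (measureReal_mono (partialSumExceeds_add_subset m h l t θ)).trans
          ((measureReal_union_le _ _).trans (add_le_add_left (measureReal_union_le _ _) _))
    _ ≤ _ := by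
        gcongr
        exact measureReal_setOf_lt_sum_le hBern hA m hh (by positivity)

variable [IsProbabilityMeasure P]

theorem measureReal_partialSumExceeds_le_of_bisection {c θ ε K C : ℝ} {N : ℕ}
    (hBern : HasBernsteinTail P X A a b γ) (hA : 0 ≤ A) (hb : 0 ≤ b) (hγ : 0 ≤ γ) (hc : 0 < c)
    (hθ0 : 0 ≤ θ) (hθ1 : θ ≤ 1) (hθ : c ≤ a * θ ^ 2) (hε : (1 - θ) ^ 2 = 4 * ε) (hε0 : 0 < ε)
    (hK : log 3 ≤ c * ε / 4 * K) (hN : 2 ≤ ε * N)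
    (hCA : 3 * A ≤ C) (hCN : N * A ≤ C) (hCK : exp (c * K) ≤ C)
    (hCb : ∀ (n : ℕ) (t : ℝ), 0 ≤ t → ε * n < b * t ^ γ →
      n * A * exp (-((a - c) * bernsteinRate b γ n t)) ≤ C)
    (m n : ℕ) (hn : 1 ≤ n) {t : ℝ} (ht : 0 ≤ t) :
    P.real (partialSumExceeds X m n t) ≤ C * exp (-(c * bernsteinRate b γ n t)) := by
  induction n using Nat.strong_induction_on generalizing m t with
  | _ n ih =>
  have ha : 0 < a := by nlinarith
  have hca : c ≤ a := hθ.trans (mul_le_of_le_one_right ha.le (pow_le_one₀ hθ0 hθ1))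
  have hunion := measureReal_partialSumExceeds_le_mul hBern hA ha.le hb m n ht
  have hR0 : 0 ≤ bernsteinRate b γ n t := div_nonneg (sq_nonneg t) (by positivity)
  rcases le_or_gt n N with hnN | hnN
  · calc _ ≤ n * A * exp (-(a * bernsteinRate b γ n t)) := by rw [mul_assoc]; exact hunion
      _ ≤ N * A * exp (-(c * bernsteinRate b γ n t)) := by gcongr
      _ ≤ C * exp (-(c * bernsteinRate b γ n t)) := by gcongr
  rcases lt_or_ge (bernsteinRate b γ n t) K with hRK | hRK
  · calc _ ≤ 1 := measureReal_le_one
      _ = exp (c * bernsteinRate b γ n t) * exp (-(c * bernsteinRate b γ n t)) := by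
        rw [← exp_add, add_neg_cancel, exp_zero]
      _ ≤ C * exp (-(c * bernsteinRate b γ n t)) := by
        gcongr
        exact (exp_le_exp.mpr (by gcongr)).trans hCK
  rcases lt_or_ge (ε * n) (b * t ^ γ) with hbt | hbt
  · calc _ ≤ n * (A * exp (-(a * bernsteinRate b γ n t))) := hunion
      _ = n * A * exp (-((a - c) * bernsteinRate b γ n t))
            * exp (-(c * bernsteinRate b γ n t)) := by
        rw [mul_assoc, ← exp_add]; ring_nf
      _ ≤ C * exp (-(c * bernsteinRate b γ n t)) := by
        gcongr
        exact hCb n t ht hbt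
  have hε1 : ε ≤ 1 / 4 := by nlinarith
  obtain ⟨l, hl1, hl_ge, hl_le⟩ := exists_nat_half_le_le (hN.trans (by gcongr) : 2 ≤ ε * n)
  have hln : l < n := by
    have : (1 : ℝ) ≤ n := by exact_mod_cast hn
    exact_mod_cast (show (l : ℝ) < n by nlinarith)
  obtain ⟨h, rfl⟩ : ∃ h, n = h + l := ⟨n - l, by omega⟩
  push_cast at hl_ge hl_le hbt hRK ⊢
  have hh : 1 ≤ h := by omega
  calc _ ≤ P.real (partialSumExceeds X m h t) + A * exp (-(a * bernsteinRate b γ h (θ * t)))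
        + P.real (partialSumExceeds X (m + h) l ((1 - θ) * t)) :=
        measureReal_partialSumExceeds_add_le hBern hA m hh l ht hθ0
    _ ≤ C * exp (-(c * bernsteinRate b γ h t)) + A * exp (-(a * bernsteinRate b γ h (θ * t)))
        + C * exp (-(c * bernsteinRate b γ l ((1 - θ) * t))) := by
        gcongr
        · exact ih h (by omega) m hh ht
        · exact ih l hln (m + h) hl1 (by nlinarith)
    _ ≤ C * exp (-(c * bernsteinRate b γ (h + l) t)) :=
        bisection_terms_le hb hγ hA hc hθ0 hθ1 hθ hε hε0 hK hCA (by exact_mod_cast hh)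
          (by exact_mod_cast hl1) rfl hl_ge hl_le ht hbt hRK

theorem exists_measureReal_partialSumExceeds_le (hBern : HasBernsteinTail P X A a b γ)
    (hA : 0 ≤ A) (hb : 0 ≤ b) (hγ : γ ∈ Set.Ioo 0 2) {c : ℝ} (hc : 0 < c) (hca : c < a) :
    ∃ C, 0 < C ∧ ∀ m n, 1 ≤ n → ∀ t, 0 ≤ t →
      P.real (partialSumExceeds X m n t) ≤ C * exp (-(c * bernsteinRate b γ n t)) := by
  set θ := (1 + c / a) / 2 with hθ_def
  set ε := (1 - θ) ^ 2 / 4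
  set K := 4 * log 3 / (c * ε)
  set N := ⌈2 / ε⌉₊
  have ha : 0 < a := hc.trans hca
  have hca' : c / a < 1 := (div_lt_one ha).mpr hca
  have hθ1 : θ < 1 := by linarith
  have hε0 : 0 < ε := div_pos (pow_pos (sub_pos.mpr hθ1) 2) four_pos
  obtain ⟨B, hB⟩ := exists_mul_exp_neg_bernsteinRate_le (b := b) hγ (sub_pos.mpr hca) hε0
  set C := max (max (3 * A) (N * A)) (max (exp (c * K)) (A * B))
  have hθ : c ≤ a * θ ^ 2 := by
    have : c = a * (c / a) := by field_simp
    rw [hθ_def]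
    nlinarith [mul_nonneg ha.le (sq_nonneg (1 - c / a))]
  have hK : log 3 ≤ c * ε / 4 * K := le_of_eq (by simp only [K]; field_simp)
  have hN : 2 ≤ ε * N := by rw [← div_le_iff₀' hε0]; exact Nat.le_ceil _
  refine ⟨C, (exp_pos _).trans_le ((le_max_left _ _).trans (le_max_right _ _)),
    fun m n hn t ht => measureReal_partialSumExceeds_le_of_bisection hBern hA hb hγ.1.le hc
      (by positivity) hθ1.le hθ (by ring) hε0 hK hN ?_ ?_ ?_ ?_ m n hn ht⟩
  · exact (le_max_left _ _).trans (le_max_left _ _)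
  · exact (le_max_right _ _).trans (le_max_left _ _)
  · exact (le_max_left _ _).trans (le_max_right _ _)
  · intro n t ht hbt
    calc n * A * exp (-((a - c) * bernsteinRate b γ n t))
        = A * (n * exp (-((a - c) * bernsteinRate b γ n t))) := by ring
      _ ≤ A * B := by gcongr; exact hB n t n.cast_nonneg ht hbt
      _ ≤ C := (le_max_right _ _).trans (le_max_right _ _)

end Probability

/-- **One-sided maximal Bernstein inequality** (Kevei–Mason, Remark 5).
If the partial sums `S(m+1, m+n) = ∑_{i=m+1}^{m+n} X i` of a sequence of real random
variables satisfy a one-sided generalized Bernstein-type inequality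
`P{S(m+1, m+n) > t} ≤ A · exp(−a t² / (n + b t^γ))`,
then for every `0 < c < a` there is a constant `C > 0` such that
`M⁺(m+1, m+n) = max_{m+1 ≤ j ≤ m+n} (S(m+1, j) ∨ 0)` satisfies
`P{M⁺(m+1, m+n) > t} ≤ C · exp(−c t² / (n + b t^γ))`. -/
theorem maximal_bernstein_one_sided
    {Ω : Type*} [MeasurableSpace Ω] (P : Measure Ω) [IsProbabilityMeasure P]
    (X : ℕ → Ω → ℝ) (A a b γ : ℝ)
    (hA : 0 < A) (hb : 0 ≤ b) (hγ : γ ∈ Set.Ioo (0 : ℝ) 2)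
    (hBern : ∀ (m n : ℕ), 1 ≤ n → ∀ t : ℝ, 0 ≤ t →
      P {ω | t < ∑ i ∈ Finset.Icc (m + 1) (m + n), X i ω}
        ≤ ENNReal.ofReal (A * Real.exp (-(a * t ^ 2) / (n + b * t ^ γ)))) :
    ∀ c : ℝ, 0 < c → c < a → ∃ C : ℝ, 0 < C ∧
      ∀ (m n : ℕ) (hn : 1 ≤ n), ∀ t : ℝ, 0 ≤ t →
        P {ω | t < (Finset.Icc (m + 1) (m + n)).sup'
              (Finset.nonempty_Icc.mpr (by omega))
              (fun j => (∑ i ∈ Finset.Icc (m + 1) j, X i ω) ⊔ 0)}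
          ≤ ENNReal.ofReal (C * Real.exp (-(c * t ^ 2) / (n + b * t ^ γ))) := by
  intro c hc hca
  obtain ⟨C, hC, hbound⟩ := exists_measureReal_partialSumExceeds_le hBern hA.le hb hγ hc hca
  refine ⟨C, hC, fun m n hn t ht => ?_⟩
  rw [setOf_lt_sup'_eq_partialSumExceeds ht, ← ofReal_measureReal, neg_div_eq_neg_mul_bernsteinRate]
  exact ENNReal.ofReal_le_ofReal (hbound m n hn t ht)
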